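/- arXiv:2407.10136 — 2 statements merged into one kernel-verified Lean document; each statement's English description precedes it below -/
import Mathlib

section
/- For every real number θ, a controlled-Ry rotation followed by a SWAP of the two qubits is implemented with only three CNOT gates: CX₁₂ · CX₂₁ · (I₂ ⊗ Ry(−θ/2)) · CX₁₂ · (I₂ ⊗ Ry(θ/2)) = SWAP · CRy(θ). -/
open Kronecker

/-- `Rz θ` is the 2×2 complex matrix `diag(exp(−iθ/2), exp(iθ/2))`. -/
noncomputable def Rz (θ : ℝ) : Matrix (Fin 2) (Fin 2) ℂ :=
  Matrix.diagonal ![Complex.exp (-(θ : ℂ) * Complex.I / 2), Complex.exp ((θ : ℂ) * Complex.I / 2)]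

/-- `Ry θ` is the real rotation matrix by angle `θ/2`, regarded as a complex matrix. -/
noncomputable def Ry (θ : ℝ) : Matrix (Fin 2) (Fin 2) ℂ :=
  !![(Real.cos (θ / 2) : ℂ), -(Real.sin (θ / 2) : ℂ);
     (Real.sin (θ / 2) : ℂ), (Real.cos (θ / 2) : ℂ)]

/-- The `SX` gate `(1/2)·[[1+i, 1−i],[1−i, 1+i]]`. -/
noncomputable def SX : Matrix (Fin 2) (Fin 2) ℂ :=
  (1 / 2 : ℂ) • !![1 + Complex.I, 1 - Complex.I; 1 - Complex.I, 1 + Complex.I]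
/-- CNOT with control on the first qubit: sends `|a b⟩` to `|a (b ⊕ a)⟩`. -/
def CX₁₂ : Matrix (Fin 2 × Fin 2) (Fin 2 × Fin 2) ℂ :=
  Matrix.of fun p q => if p = (q.1, q.1 + q.2) then 1 else 0

/-- CNOT with control on the second qubit: sends `|a b⟩` to `|(a ⊕ b) b⟩`. -/
def CX₂₁ : Matrix (Fin 2 × Fin 2) (Fin 2 × Fin 2) ℂ :=
  Matrix.of fun p q => if p = (q.1 + q.2, q.2) then 1 else 0

/-- The SWAP gate: sends `|a b⟩` to `|b a⟩`. -/
def SWAP : Matrix (Fin 2 × Fin 2) (Fin 2 × Fin 2) ℂ :=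
  Matrix.of fun p q => if p = (q.2, q.1) then 1 else 0

/-- The controlled-`Ry` gate `diag(I₂, Ry θ)` (control on the first qubit). -/
noncomputable def CRy (θ : ℝ) : Matrix (Fin 2 × Fin 2) (Fin 2 × Fin 2) ℂ :=
  Matrix.of fun p q =>
    if p.1 = q.1 then
      (if p.1 = 1 then Ry θ p.2 q.2 else (1 : Matrix (Fin 2) (Fin 2) ℂ) p.2 q.2)
    else 0

set_option maxHeartbeats 4000000 in
/-- A controlled-`Ry` rotation followed by a SWAP is implemented with only three CNOT gates. -/
theorem swap_cry_decomposition (θ : ℝ) :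
    CX₁₂ * CX₂₁ * ((1 : Matrix (Fin 2) (Fin 2) ℂ) ⊗ₖ Ry (-θ / 2)) * CX₁₂ *
      ((1 : Matrix (Fin 2) (Fin 2) ℂ) ⊗ₖ Ry (θ / 2)) = SWAP * CRy θ := by
  ext ⟨a,b⟩ ⟨c,d⟩
  have hm : -θ / 2 / 2 = -(θ / 4) := by ring
  have h1 : ((θ:ℂ)/2/2) = θ/4 := by ring
  have h2 : Complex.cos ((θ:ℂ)/2)
      = Complex.cos (θ/4) * Complex.cos (θ/4) - Complex.sin (θ/4) * Complex.sin (θ/4) := by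
    rw [show ((θ:ℂ)/2) = θ/4 + θ/4 by ring, Complex.cos_add]
  have h3 : Complex.sin ((θ:ℂ)/2)
      = Complex.sin (θ/4) * Complex.cos (θ/4) + Complex.cos (θ/4) * Complex.sin (θ/4) := by
    rw [show ((θ:ℂ)/2) = θ/4 + θ/4 by ring, Complex.sin_add]
  fin_cases a <;> fin_cases b <;> fin_cases c <;> fin_cases d <;>
    simp [CX₁₂, CX₂₁, SWAP, CRy, Ry, Matrix.mul_apply, Fintype.sum_prod_type,
      Fin.sum_univ_succ, Matrix.one_apply, Matrix.kroneckerMap_apply, hm,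
      Real.cos_neg, Real.sin_neg, Prod.ext_iff, h1, h2, h3] <;>
    ring_nf <;>
    first
      | rfl
      | linear_combination Complex.cos_sq_add_sin_sq ((θ:ℂ)*(1/4))
end

section
/- Let n ≥ 1 and let ξ₀, ξ₁, …, ξ_n be real numbers. For each j ∈ {1, …, n}, let G_j be the 2^(n+1) × 2^(n+1) complex matrix, with rows and columns indexed by pairs (b, s) where b : Fin n → Bool and s ∈ Fin 2, whose entry at ((b, s), (b', s')) equals Ry(ξ_j)_{s,s'} if b = b' and b(j) = true, equals I₂_{s,s'} if b = b' and b(j) = false, and equals 0 if b ≠ b'. Let G₀ be the matrix whose entry at ((b, s), (b', s')) equals Ry(ξ₀)_{s,s'} if b = b' and 0 otherwise. Then the product G_n · G_{n−1} · ⋯ · G₁ · G₀ equals the block-diagonal matrix whose entry at ((b, s), (b', s')) is Ry(ξ₀ + Σ_{j : b(j) = true} ξ_j)_{s,s'} if b = b' and 0 otherwise. (The pseudo-rotation circuit of n+1 rotations, with the j-th one controlled by the j-th control qubit, implements the uniformly controlled rotation whose angle on control value b is the linear combination ξ₀ + Σ_j b_j ξ_j.) -/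
/-- The controlled-`Ry(ξ)` gate on `n` control qubits and one target qubit, with
control on the `j`-th control qubit and target on the last qubit. -/
noncomputable def ctrlRy (n : ℕ) (j : Fin n) (ξ : ℝ) :
    Matrix ((Fin n → Bool) × Fin 2) ((Fin n → Bool) × Fin 2) ℂ :=
  Matrix.of fun x y =>
    if x.1 = y.1 then
      (if x.1 j = true then Ry ξ x.2 y.2 else (1 : Matrix (Fin 2) (Fin 2) ℂ) x.2 y.2)
    else 0

/-- The unconditional `Ry(ξ₀)` rotation of the target qubit. -/
noncomputable def freeRy (n : ℕ) (ξ₀ : ℝ) :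
    Matrix ((Fin n → Bool) × Fin 2) ((Fin n → Bool) × Fin 2) ℂ :=
  Matrix.of fun x y => if x.1 = y.1 then Ry ξ₀ x.2 y.2 else 0


section Aux

lemma Ry_zero : Ry 0 = 1 := by
  simp [Ry, Matrix.one_fin_two]

lemma Ry_mul (a b : ℝ) : Ry a * Ry b = Ry (a + b) := by
  have h : (a + b) / 2 = a / 2 + b / 2 := by ring
  ext i j
  fin_cases i <;> fin_cases j <;>
    simp [Ry, Matrix.mul_apply, Fin.sum_univ_two, h, Real.cos_add, Real.sin_add] <;>
    ring

noncomputable def D (n : ℕ) (f : (Fin n → Bool) → Matrix (Fin 2) (Fin 2) ℂ) :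
    Matrix ((Fin n → Bool) × Fin 2) ((Fin n → Bool) × Fin 2) ℂ :=
  Matrix.of fun x y => if x.1 = y.1 then f x.1 x.2 y.2 else 0

lemma D_mul (n : ℕ) (f g : (Fin n → Bool) → Matrix (Fin 2) (Fin 2) ℂ) :
    D n f * D n g = D n (fun b => f b * g b) := by
  ext ⟨b, s⟩ ⟨b', s'⟩
  simp only [D, Matrix.mul_apply, Matrix.of_apply, Fintype.sum_prod_type]
  by_cases h : b = b'
  · subst h
    simp [Finset.sum_ite_eq', Matrix.mul_apply]
  · simp [h]

lemma D_one (n : ℕ) : D n (fun _ => 1) = 1 := by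
  ext ⟨b, s⟩ ⟨b', s'⟩
  simp [D, Matrix.one_apply, Prod.ext_iff]
  by_cases h : b = b' <;> simp [h]

lemma D_list_prod (n : ℕ) (l : List ((Fin n → Bool) → ℝ)) :
    (l.map (fun f => D n (fun b => Ry (f b)))).prod =
      D n (fun b => Ry ((l.map (· b)).sum)) := by
  induction l with
  | nil => simp [Ry_zero, D_one]
  | cons f l ih =>
      simp only [List.map_cons, List.prod_cons, ih, D_mul, Ry_mul, List.sum_cons]

lemma ctrlRy_eq_D (n : ℕ) (j : Fin n) (ξ : ℝ) :
    ctrlRy n j ξ = D n (fun b => Ry (if b j = true then ξ else 0)) := by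
  ext ⟨b, s⟩ ⟨b', s'⟩
  by_cases h : b j = true <;> simp [ctrlRy, D, h, Ry_zero]

end Aux

/-- The pseudo-rotation circuit `G_n ⋯ G₁ G₀` of `n + 1` rotations implements the
uniformly controlled rotation whose angle on control value `b` is the linear
combination `ξ₀ + Σ_{j : b j = true} ξ_j`. -/
theorem pseudo_rotation_circuit (n : ℕ) (hn : 1 ≤ n) (ξ₀ : ℝ) (ξ : Fin n → ℝ) :
    (List.ofFn fun j : Fin n => ctrlRy n j (ξ j)).reverse.prod * freeRy n ξ₀ =
      Matrix.of fun x y =>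
        if x.1 = y.1 then
          Ry (ξ₀ + ∑ j ∈ Finset.univ.filter (fun j => x.1 j = true), ξ j) x.2 y.2
        else 0 := by
  have hfree : freeRy n ξ₀ = D n (fun _ => Ry ξ₀) := rfl
  simp only [ctrlRy_eq_D, hfree]
  have h1 : (List.ofFn fun j : Fin n =>
      D n (fun b => Ry (if b j = true then ξ j else 0))).reverse =
      ((List.ofFn fun j : Fin n => fun b : Fin n → Bool =>
        if b j = true then ξ j else 0).reverse).map
        (fun f => D n (fun b => Ry (f b))) := by
    rw [List.map_reverse, List.map_ofFn]
    rfl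
  rw [h1, D_list_prod, D_mul]
  have h2 : ∀ b : Fin n → Bool,
      (((List.ofFn fun j : Fin n => fun b : Fin n → Bool =>
        if b j = true then ξ j else 0).reverse).map (· b)).sum =
      ∑ j ∈ Finset.univ.filter (fun j => b j = true), ξ j := by
    intro b
    rw [List.map_reverse, List.sum_reverse, List.map_ofFn, List.sum_ofFn]
    simp [Finset.sum_filter]
  ext ⟨b, s⟩ ⟨b', s'⟩
  simp only [D, Matrix.of_apply, Ry_mul, h2]
  rw [add_comm]
end
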